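/- arXiv:2303.11712 — 6 statements merged into one kernel-verified Lean document; each statement's English description precedes it below -/
import Mathlib

section
/- Let F be a formula (a finite set of clauses) and S ⊆ F. Then S is a Minimal Correction Subset (MCS) of F if and only if S is a minimal hitting set of the collection of all Minimal Unsatisfiable Subsets (MUSs) of F. -/
/-- A literal is an atom paired with a Boolean polarity. -/
abbrev Lit (V : Type*) := V × Bool

/-- A clause is a finite set of literals. -/
abbrev Clause (V : Type*) := Finset (V × Bool)

/-- A formula is a finite set of clauses. -/
abbrev Formula (V : Type*) := Finset (Clause V)

/-- An assignment satisfies a literal `(x, b)` iff it assigns `b` to `x`. -/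
def SatLit {V : Type*} (v : V → Bool) (l : Lit V) : Prop := v l.1 = l.2

/-- An assignment satisfies a clause iff it satisfies some literal of it. -/
def SatClause {V : Type*} (v : V → Bool) (c : Clause V) : Prop := ∃ l ∈ c, SatLit v l

/-- An assignment satisfies a formula iff it satisfies every clause of it. -/
def SatFm {V : Type*} (v : V → Bool) (F : Formula V) : Prop := ∀ c ∈ F, SatClause v c

/-- A formula is satisfiable iff some assignment satisfies it. -/
def Satisfiable' {V : Type*} (F : Formula V) : Prop := ∃ v, SatFm v F

/-- A MUS of `F`: an unsatisfiable subset of `F` all of whose strict subsets are satisfiable. -/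
def IsMUS {V : Type*} (F S : Formula V) : Prop :=
  S ⊆ F ∧ ¬ Satisfiable' S ∧ ∀ S' ⊂ S, Satisfiable' S'

/-- A correction subset of `F`: a subset `S ⊆ F` with `F \ S` satisfiable. -/
def IsCorrection {V : Type*} [DecidableEq V] (F S : Formula V) : Prop :=
  S ⊆ F ∧ Satisfiable' (F \ S)

/-- An MCS of `F`: a correction subset of `F` no strict subset of which is a
correction subset of `F`. -/
def IsMCS {V : Type*} [DecidableEq V] (F S : Formula V) : Prop :=
  IsCorrection F S ∧ ∀ S' ⊂ S, ¬ IsCorrection F S'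

/-- `h` is a hitting set of the collection `H` iff it intersects every member of `H`. -/
def IsHittingSet {V : Type*} [DecidableEq V] (H : Set (Formula V)) (h : Formula V) : Prop :=
  ∀ C ∈ H, (h ∩ C).Nonempty

/-- A minimal hitting set: a hitting set no strict subset of which is a hitting set. -/
def IsMinimalHittingSet {V : Type*} [DecidableEq V] (H : Set (Formula V)) (h : Formula V) : Prop :=
  IsHittingSet H h ∧ ∀ h' ⊂ h, ¬ IsHittingSet H h'

lemma sat_mono {V : Type*} {G T : Formula V} (h : T ⊆ G) (hs : Satisfiable' G) :
    Satisfiable' T := by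
  obtain ⟨v, hv⟩ := hs
  exact ⟨v, fun c hc => hv c (h hc)⟩

lemma exists_mus {V : Type*} (G : Formula V) (h : ¬ Satisfiable' G) :
    ∃ M ⊆ G, ¬ Satisfiable' M ∧ ∀ S' ⊂ M, Satisfiable' S' := by
  induction G using Finset.strongInduction with
  | _ G ih =>
    by_cases hall : ∀ S' ⊂ G, Satisfiable' S'
    · exact ⟨G, subset_rfl, h, hall⟩
    · push_neg at hall
      obtain ⟨G', hG', hG'u⟩ := hall
      obtain ⟨M, hMG, hMu, hMmin⟩ := ih G' hG' hG'u
      exact ⟨M, hMG.trans hG'.subset, hMu, hMmin⟩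

lemma correction_iff_hits {V : Type*} [DecidableEq V] {F T : Formula V} (hTF : T ⊆ F) :
    Satisfiable' (F \ T) ↔ IsHittingSet {M | IsMUS F M} T := by
  constructor
  · rintro hs M ⟨hMF, hMu, -⟩
    by_contra hne
    rw [Finset.not_nonempty_iff_eq_empty] at hne
    have hMsub : M ⊆ F \ T := by
      intro c hc
      refine Finset.mem_sdiff.2 ⟨hMF hc, fun hcT => ?_⟩
      exact Finset.notMem_empty c (hne ▸ Finset.mem_inter.2 ⟨hcT, hc⟩)
    exact hMu (sat_mono hMsub hs)
  · intro hhit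
    by_contra hu
    obtain ⟨M, hMsub, hMu, hMmin⟩ := exists_mus _ hu
    obtain ⟨c, hc⟩ := hhit M ⟨hMsub.trans (Finset.sdiff_subset), hMu, hMmin⟩
    rw [Finset.mem_inter] at hc
    exact (Finset.mem_sdiff.1 (hMsub hc.2)).2 hc.1

theorem mcs_iff_minimal_hitting_set_of_muses {V : Type*} [DecidableEq V]
    (F S : Formula V) (hSF : S ⊆ F) :
    IsMCS F S ↔ IsMinimalHittingSet {M | IsMUS F M} S := by
  constructor
  · rintro ⟨⟨-, hsat⟩, hmin⟩
    refine ⟨(correction_iff_hits hSF).1 hsat, fun S' hS' hhit => ?_⟩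
    have hS'F : S' ⊆ F := hS'.subset.trans hSF
    exact hmin S' hS' ⟨hS'F, (correction_iff_hits hS'F).2 hhit⟩
  · rintro ⟨hhit, hmin⟩
    refine ⟨⟨hSF, (correction_iff_hits hSF).2 hhit⟩, fun S' hS' hcorr => ?_⟩
    exact hmin S' hS' ((correction_iff_hits hcorr.1).1 hcorr.2)
end

section
/- Let F be a formula (a finite set of clauses) and S ⊆ F. Then S is a Minimal Unsatisfiable Subset (MUS) of F if and only if S is a minimal hitting set of the collection of all Minimal Correction Subsets (MCSs) of F. -/
lemma exists_mcs_subset {V : Type*} [DecidableEq V] (F : Formula V) :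
    ∀ C : Formula V, IsCorrection F C → ∃ M ⊆ C, IsMCS F M := by
  intro C
  induction C using Finset.strongInduction with
  | _ C ih =>
    intro hC
    by_cases h : ∀ C' ⊂ C, ¬ IsCorrection F C'
    · exact ⟨C, le_refl _, hC, h⟩
    · push_neg at h
      obtain ⟨C', hC'C, hC'⟩ := h
      obtain ⟨M, hMC', hM⟩ := ih C' hC'C hC'
      exact ⟨M, hMC'.trans hC'C.subset, hM⟩

lemma unsat_iff_hits {V : Type*} [DecidableEq V] (F S : Formula V) (hS : S ⊆ F) :
    ¬ Satisfiable' S ↔ IsHittingSet {C | IsMCS F C} S := by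
  constructor
  · rintro hunsat M hM
    obtain ⟨hMF, v, hv⟩ := hM.1
    by_contra hempty
    rw [Finset.not_nonempty_iff_eq_empty] at hempty
    refine hunsat ⟨v, fun c hc => hv c ?_⟩
    refine Finset.mem_sdiff.2 ⟨hS hc, fun hcM => ?_⟩
    exact absurd (Finset.mem_inter.2 ⟨hc, hcM⟩) (by simp [hempty])
  · rintro hhit ⟨v, hv⟩
    have hcorr : IsCorrection F (F \ S) := by
      refine ⟨Finset.sdiff_subset, v, fun c hc => hv c ?_⟩
      obtain ⟨hcF, hcnot⟩ := Finset.mem_sdiff.1 hc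
      by_contra hcS
      exact hcnot (Finset.mem_sdiff.2 ⟨hcF, hcS⟩)
    obtain ⟨M, hMsub, hM⟩ := exists_mcs_subset F _ hcorr
    obtain ⟨c, hc⟩ := hhit M hM
    rcases Finset.mem_inter.1 hc with ⟨hcS, hcM⟩
    exact (Finset.mem_sdiff.1 (hMsub hcM)).2 hcS

theorem mus_iff_minimal_hitting_set_of_mcses {V : Type*} [DecidableEq V]
    (F S : Formula V) (hSF : S ⊆ F) :
    IsMUS F S ↔ IsMinimalHittingSet {C | IsMCS F C} S := by
  constructor
  · rintro ⟨_, hunsat, hmin⟩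
    refine ⟨(unsat_iff_hits F S hSF).1 hunsat, fun S' hS' hhit => ?_⟩
    have hS'F : S' ⊆ F := hS'.subset.trans hSF
    exact ((unsat_iff_hits F S' hS'F).2 hhit) (hmin S' hS')
  · rintro ⟨hhit, hmin⟩
    refine ⟨hSF, (unsat_iff_hits F S hSF).2 hhit, fun S' hS' => ?_⟩
    have hS'F : S' ⊆ F := hS'.subset.trans hSF
    by_contra hunsat
    exact hmin S' hS' ((unsat_iff_hits F S' hS'F).1 hunsat)
end

section
/- Let F be a formula, f a cost function from finite sets of clauses to ℕ, p a predicate on finite sets of clauses, and H a collection of correction subsets of F. If h ⊆ F is a hitting set of H satisfying p whose cost f(h) is minimal among all hitting sets of H contained in F that satisfy p, then f(h) ≤ f(S') for every unsatisfiable S' ⊆ F with p(S'). In other words, the cost of the optimal hitting set is a lower bound on the cost of every constrained unsatisfiable subset. -/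
theorem optimal_hitting_set_cost_lower_bound {V : Type*} [DecidableEq V]
    (F : Formula V) (f : Formula V → ℕ) (p : Formula V → Prop)
    (H : Set (Formula V)) (hH : ∀ C ∈ H, IsCorrection F C)
    (h : Formula V) (hhF : h ⊆ F) (hhit : IsHittingSet H h) (hp : p h)
    (hopt : ∀ h' ⊆ F, IsHittingSet H h' → p h' → f h ≤ f h') :
    ∀ S' ⊆ F, ¬ Satisfiable' S' → p S' → f h ≤ f S' := by
  intro S' hSF hunsat hpS
  apply hopt S' hSF _ hpS
  intro C hC
  by_contra hne
  rw [Finset.not_nonempty_iff_eq_empty] at hne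
  obtain ⟨hCF, v, hv⟩ := hH C hC
  apply hunsat
  refine ⟨v, fun c hc => hv c ?_⟩
  rw [Finset.mem_sdiff]
  refine ⟨hSF hc, fun hcC => ?_⟩
  have : c ∈ S' ∩ C := Finset.mem_inter.mpr ⟨hc, hcC⟩
  simp [hne] at this
end

section
/- Let F be a formula, H a collection of sets of clauses, and S ⊆ F a satisfiable set that is a hitting set of H. Then F \ S is a correction subset of F and F \ S does not belong to H. (This guarantees that each iteration of the OCUS algorithm strictly enlarges the collection of sets-to-hit.) -/
theorem sat_hitting_set_complement_new_correction_subset {V : Type*} [DecidableEq V]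
    (F : Formula V) (H : Set (Formula V)) (S : Formula V)
    (hSF : S ⊆ F) (hS : Satisfiable' S) (hhit : IsHittingSet H S) :
    IsCorrection F (F \ S) ∧ F \ S ∉ H := by
  constructor
  · refine ⟨Finset.sdiff_subset, ?_⟩
    have : F \ (F \ S) = S := by
      ext c
      simp only [Finset.mem_sdiff, not_and, not_not]
      exact ⟨fun ⟨h1, h2⟩ => h2 h1, fun h => ⟨hSF h, fun _ => h⟩⟩
    rw [this]; exact hS
  · intro hmem
    obtain ⟨c, hc⟩ := hhit _ hmem
    simp [Finset.mem_inter, Finset.mem_sdiff] at hc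
end

section
/- Let G be a satisfiable formula and J a nonempty finite set of literals each of which is a consequence of G. Let neg(J) denote the finite set of unit clauses {¬ℓ} for ℓ ∈ J. Then there exists an unsatisfiable subset S of G ∪ neg(J) such that S contains exactly one clause from neg(J). (Hence the OCUS call with the exactly-one predicate in the explanation setting never fails.) -/
/-- The negation of a literal flips its polarity. -/
def negLit {V : Type*} (l : Lit V) : Lit V := (l.1, !l.2)

/-- A literal `l` is a consequence of `F` iff every assignment satisfying `F` satisfies `l`. -/
def Consequence {V : Type*} (F : Formula V) (l : Lit V) : Prop :=
  ∀ v, SatFm v F → SatLit v l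

theorem ocus_exactly_one_never_fails {V : Type*} [DecidableEq V]
    (G : Formula V) (hG : Satisfiable' G)
    (J : Finset (Lit V)) (hJ : J.Nonempty)
    (hcons : ∀ l ∈ J, Consequence G l) :
    ∃ S ⊆ G ∪ J.image (fun l => ({negLit l} : Clause V)),
      ¬ Satisfiable' S ∧
        (S ∩ J.image (fun l => ({negLit l} : Clause V))).card = 1 := by
  obtain ⟨l, hl⟩ := hJ
  set c : Clause V := {negLit l} with hc
  set I : Formula V := J.image (fun l => ({negLit l} : Clause V)) with hI
  -- G contains no clause of I
  have hGI : ∀ d ∈ G, d ∉ I := by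
    intro d hdG hdI
    obtain ⟨l', hl', hdl'⟩ := Finset.mem_image.mp hdI
    obtain ⟨v, hv⟩ := hG
    have h1 : SatLit v l' := hcons l' hl' v hv
    obtain ⟨m, hm, hsm⟩ := hv d hdG
    rw [← hdl'] at hm
    have : m = negLit l' := Finset.mem_singleton.mp hm
    subst this
    simp [SatLit, negLit] at hsm h1
    rw [h1] at hsm
    simp at hsm
  refine ⟨insert c G, ?_, ?_, ?_⟩
  · intro d hd
    rcases Finset.mem_insert.mp hd with h | h
    · exact Finset.mem_union_right _ (h ▸ Finset.mem_image_of_mem _ hl)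
    · exact Finset.mem_union_left _ h
  · rintro ⟨v, hv⟩
    have hvG : SatFm v G := fun d hd => hv d (Finset.mem_insert_of_mem hd)
    have h1 : SatLit v l := hcons l hl v hvG
    obtain ⟨m, hm, hsm⟩ := hv c (Finset.mem_insert_self _ _)
    have : m = negLit l := Finset.mem_singleton.mp hm
    subst this
    simp [SatLit, negLit] at hsm h1
    rw [h1] at hsm
    simp at hsm
  · have : insert c G ∩ I = {c} := by
      apply Finset.Subset.antisymm
      · intro d hd
        obtain ⟨hd1, hd2⟩ := Finset.mem_inter.mp hd
        rcases Finset.mem_insert.mp hd1 with h | h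
        · exact Finset.mem_singleton.mpr h
        · exact absurd hd2 (hGI d h)
      · intro d hd
        have : d = c := Finset.mem_singleton.mp hd
        subst this
        exact Finset.mem_inter.mpr ⟨Finset.mem_insert_self _ _,
          Finset.mem_image_of_mem _ hl⟩
    rw [this, Finset.card_singleton]
end

section
/- Let G be a satisfiable formula, J a nonempty finite set of literals each of which is a consequence of G, and neg(J) the finite set of unit clauses {¬ℓ} for ℓ ∈ J. Let f be a cost function from finite sets of clauses to ℕ. Suppose S is an OCUS of F := G ∪ neg(J) with respect to f and the predicate p(S) := (S contains exactly one clause from neg(J)). Then: (1) there is a unique literal ℓ ∈ J with {¬ℓ} ∈ S; (2) S \ {{¬ℓ}} ⊆ G and ℓ is a consequence of S \ {{¬ℓ}}; and (3) for every literal ℓ' ∈ J and every E ⊆ G such that ℓ' is a consequence of E, one has f(S) ≤ f(E ∪ {{¬ℓ'}}). That is, S yields a cost-optimal explanation step over all candidate literals. -/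
/-- An OCUS of `F` w.r.t. cost `f` and predicate `p`: an unsatisfiable subset of `F`
satisfying `p` whose cost is minimal among all unsatisfiable subsets of `F` satisfying `p`. -/
def IsOCUS {V : Type*} (F : Formula V) (f : Formula V → ℕ) (p : Formula V → Prop)
    (S : Formula V) : Prop :=
  S ⊆ F ∧ ¬ Satisfiable' S ∧ p S ∧
    ∀ S' ⊆ F, ¬ Satisfiable' S' → p S' → f S ≤ f S'

theorem ocus_yields_optimal_explanation_step {V : Type*} [DecidableEq V]
    (G : Formula V) (hG : Satisfiable' G)
    (J : Finset (Lit V)) (hJ : J.Nonempty)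
    (hcons : ∀ l ∈ J, Consequence G l)
    (f : Formula V → ℕ) (S : Formula V)
    (hS : IsOCUS (G ∪ J.image (fun l => ({negLit l} : Clause V))) f
      (fun S' => (S' ∩ J.image (fun l => ({negLit l} : Clause V))).card = 1) S) :
    (∃! l, l ∈ J ∧ ({negLit l} : Clause V) ∈ S) ∧
    (∀ l ∈ J, ({negLit l} : Clause V) ∈ S →
      S.erase ({negLit l} : Clause V) ⊆ G ∧
        Consequence (S.erase ({negLit l} : Clause V)) l) ∧
    (∀ l' ∈ J, ∀ E ⊆ G, Consequence E l' →
      f S ≤ f (E ∪ {({negLit l'} : Clause V)})) := by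
  obtain ⟨hSsub, hSunsat, hScard, hSmin⟩ := hS
  set negJ := J.image (fun l => ({negLit l} : Clause V)) with hnegJ
  have hnotG : ∀ l ∈ J, ({negLit l} : Clause V) ∉ G := by
    intro l hl hmem
    obtain ⟨v, hv⟩ := hG
    have h1 : SatLit v l := hcons l hl v hv
    obtain ⟨l', hl', hsat⟩ := hv _ hmem
    simp only [Finset.mem_singleton] at hl'
    subst hl'
    simp only [SatLit, negLit] at hsat h1
    rw [h1] at hsat
    exact (Bool.not_ne_self l.2).symm hsat
  have hinj : ∀ l l' : Lit V, negLit l = negLit l' → l = l' := by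
    intro l l' h
    simp only [negLit, Prod.mk.injEq] at h
    exact Prod.ext h.1 (Bool.not_inj h.2)
  obtain ⟨c, hc⟩ := Finset.card_eq_one.mp hScard
  have hcmem : c ∈ S ∩ negJ := hc ▸ Finset.mem_singleton_self c
  obtain ⟨hcS, hcneg⟩ := Finset.mem_inter.mp hcmem
  obtain ⟨l₀, hl₀J, hl₀c⟩ := Finset.mem_image.mp hcneg
  -- uniqueness helper
  have huniq : ∀ l ∈ J, ({negLit l} : Clause V) ∈ S → l = l₀ := by
    intro l hl hls
    have : ({negLit l} : Clause V) ∈ S ∩ negJ :=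
      Finset.mem_inter.mpr ⟨hls, Finset.mem_image.mpr ⟨l, hl, rfl⟩⟩
    rw [hc, Finset.mem_singleton, ← hl₀c] at this
    exact hinj _ _ (Finset.singleton_inj.mp this)
  refine ⟨⟨l₀, ⟨hl₀J, hl₀c ▸ hcS⟩, fun l hl => huniq l hl.1 hl.2⟩, ?_, ?_⟩
  · intro l hl hls
    constructor
    · intro d hd
      obtain ⟨hdne, hdS⟩ := Finset.mem_erase.mp hd
      rcases Finset.mem_union.mp (hSsub hdS) with h | h
      · exact h
      · exfalso
        have : d ∈ S ∩ negJ := Finset.mem_inter.mpr ⟨hdS, h⟩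
        rw [hc, Finset.mem_singleton] at this
        have hll : l = l₀ := huniq l hl hls
        exact hdne (by rw [this, ← hl₀c, hll])
    · intro v hv
      by_contra hns
      apply hSunsat
      refine ⟨v, fun d hd => ?_⟩
      by_cases hdl : d = ({negLit l} : Clause V)
      · subst hdl
        refine ⟨negLit l, Finset.mem_singleton_self _, ?_⟩
        simp only [SatLit, negLit] at hns ⊢
        exact Bool.eq_not_iff.mpr hns
      · exact hv d (Finset.mem_erase.mpr ⟨hdl, hd⟩)
  · intro l' hl' E hE hconsE
    apply hSmin
    · intro d hd
      rcases Finset.mem_union.mp hd with h | h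
      · exact Finset.mem_union_left _ (hE h)
      · rw [Finset.mem_singleton] at h
        exact Finset.mem_union_right _ (Finset.mem_image.mpr ⟨l', hl', h.symm⟩)
    · rintro ⟨v, hv⟩
      have hvE : SatFm v E := fun d hd => hv d (Finset.mem_union_left _ hd)
      have h1 : SatLit v l' := hconsE v hvE
      obtain ⟨l'', hl'', hsat⟩ := hv ({negLit l'} : Clause V)
        (Finset.mem_union_right _ (Finset.mem_singleton_self _))
      simp only [Finset.mem_singleton] at hl''
      subst hl''
      simp only [SatLit, negLit] at hsat h1
      rw [h1] at hsat
      exact (Bool.not_ne_self l'.2).symm hsat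
    · have hEinter : ∀ d ∈ E, d ∉ negJ := by
        intro d hd hdneg
        obtain ⟨m, hm, hmd⟩ := Finset.mem_image.mp hdneg
        exact hnotG m hm (hmd ▸ hE hd)
      have : (E ∪ {({negLit l'} : Clause V)}) ∩ negJ = {({negLit l'} : Clause V)} := by
        ext d
        simp only [Finset.mem_inter, Finset.mem_union, Finset.mem_singleton]
        constructor
        · rintro ⟨h | h, hneg⟩
          · exact absurd hneg (hEinter d h)
          · exact h
        · rintro rfl
          exact ⟨Or.inr rfl, Finset.mem_image.mpr ⟨l', hl', rfl⟩⟩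
      simp only [this, Finset.card_singleton]
end
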